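/- Let G be a graph without isolated vertices such that for every vertex x the localization G_x is in W₂ with α(G_x) = α(G) − 1, and such that for every edge ab the graph G_{ab} is well-covered with α(G_{ab}) = α(G) − 1, and such that every G_y has no isolated vertices. Then for every vertex x, the graph G \ x is well-covered with α(G \ x) = α(G). -/

import Mathlib

open Finset

section EdgeIdealPaper

variable {V : Type*} [Fintype V] [DecidableEq V]

/-- `S` is an independent set of vertices in `G`. -/
def IsIndep (G : SimpleGraph V) (S : Finset V) : Prop :=
  ∀ u ∈ S, ∀ v ∈ S, ¬ G.Adj u v

/-- `S` is a maximal independent set of the induced subgraph of `G` on `A`. -/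
def IsMaxIndepIn (G : SimpleGraph V) (A S : Finset V) : Prop :=
  S ⊆ A ∧ IsIndep G S ∧ ∀ v ∈ A, v ∉ S → ¬ IsIndep G (insert v S)

open scoped Classical in
/-- The independence number of the induced subgraph of `G` on `A`. -/
noncomputable def alphaIn (G : SimpleGraph V) (A : Finset V) : ℕ :=
  ((A.powerset).filter (fun S => IsIndep G S)).sup Finset.card

/-- The induced subgraph of `G` on `A` is well-covered. -/
def WellCoveredIn (G : SimpleGraph V) (A : Finset V) : Prop :=
  ∀ S, IsMaxIndepIn G A S → S.card = alphaIn G A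

/-- The induced subgraph of `G` on `A` is in the class `W₂`. -/
def W2In (G : SimpleGraph V) (A : Finset V) : Prop :=
  WellCoveredIn G A ∧
    ∀ x ∈ A, WellCoveredIn G (A.erase x) ∧ alphaIn G (A.erase x) = alphaIn G A

open scoped Classical in
/-- The neighborhood of a vertex `a` in `G`, as a `Finset`. -/
noncomputable def nbr (G : SimpleGraph V) (a : V) : Finset V :=
  univ.filter (fun v => G.Adj a v)

open scoped Classical in
/-- The neighborhood `N_G(S)` of a set `S` of vertices: vertices outside `S`
adjacent to some vertex of `S`. -/
noncomputable def nbrSet (G : SimpleGraph V) (S : Finset V) : Finset V :=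
  univ.filter (fun v => v ∉ S ∧ ∃ u ∈ S, G.Adj u v)

/-- The vertex set of the localization `G_S = G \ (S ∪ N_G(S))`. -/
noncomputable def loc (G : SimpleGraph V) (S : Finset V) : Finset V :=
  univ \ (S ∪ nbrSet G S)

/-- The vertex set of `G_{ab} = G \ (N_G(a) ∪ N_G(b))`. -/
noncomputable def locE (G : SimpleGraph V) (a b : V) : Finset V :=
  univ \ (nbr G a ∪ nbr G b)

/-- The induced subgraph of `G` on `A` has no isolated vertices. -/
def NoIsolatedIn (G : SimpleGraph V) (A : Finset V) : Prop :=
  ∀ v ∈ A, ∃ u ∈ A, G.Adj v u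

open scoped Classical in
/-- The reduced Euler characteristic `∑_{F} (-1)^{|F|-1}` (the empty face
contributing `-1`) of the independence complex of the induced subgraph of `G` on `A`. -/
noncomputable def indEuler (G : SimpleGraph V) (A : Finset V) : ℤ :=
  -∑ S ∈ (A.powerset).filter (fun S => IsIndep G S), (-1 : ℤ) ^ S.card

end EdgeIdealPaper

/-!
Deleting a vertex `s` of a maximal independent set `S` leaves a maximal independent set of the
localization `G_s`, so the hypotheses on the `G_s` give `|S| - 1 = α(G) - 1`: this makes `G`
well-covered. Extending `{y}`, for a neighbour `y` of `x`, to a maximal independent set of `G`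
shows `α(G \ x) = α(G)`. A maximal independent set `S` of `G \ x` either dominates `x`, and is
then maximal in `G`, or, for any `s ∈ S`, has `x ∈ G_s` and `S \ {s}` maximal in `G_s \ x`,
whose independence number is `α(G_s) = α(G) - 1` because `G_s ∈ W₂`.
-/

section IndependentSets

variable {V : Type*} {G : SimpleGraph V}

lemma IsIndep.mono {S T : Finset V} (hS : IsIndep G S) (hTS : T ⊆ S) : IsIndep G T :=
  fun u hu v hv => hS u (hTS hu) v (hTS hv)

lemma isIndep_singleton (v : V) : IsIndep G {v} := by
  intro a ha b hb
  rw [mem_singleton] at ha hb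
  rw [ha, hb]
  exact G.loopless.irrefl v

lemma card_le_alphaIn {A S : Finset V} (hSA : S ⊆ A) (hS : IsIndep G S) :
    S.card ≤ alphaIn G A := by
  classical
  exact le_sup (f := card) (mem_filter.2 ⟨mem_powerset.2 hSA, hS⟩)

lemma alphaIn_mono {A B : Finset V} (h : A ⊆ B) : alphaIn G A ≤ alphaIn G B := by
  classical
  refine sup_mono fun S hS => ?_
  simp only [mem_filter, mem_powerset] at hS ⊢
  exact ⟨hS.1.trans h, hS.2⟩

variable [DecidableEq V]

lemma IsIndep.exists_adj_of_not_isIndep_insert {S : Finset V} {v : V} (hS : IsIndep G S)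
    (h : ¬ IsIndep G (insert v S)) : ∃ s ∈ S, G.Adj v s := by
  by_contra! hc
  apply h
  intro a ha b hb
  rcases mem_insert.1 ha with rfl | haS
  · rcases mem_insert.1 hb with rfl | hbS
    · exact G.loopless.irrefl _
    · exact hc _ hbS
  · rcases mem_insert.1 hb with rfl | hbS
    · exact fun hab => hc _ haS hab.symm
    · exact hS a haS b hbS

lemma exists_isMaxIndepIn_superset {A S : Finset V} (hSA : S ⊆ A) (hS : IsIndep G S) :
    ∃ M, S ⊆ M ∧ IsMaxIndepIn G A M := by
  classical
  obtain ⟨M, hM, hmax⟩ := exists_max_image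
    (A.powerset.filter fun T => S ⊆ T ∧ IsIndep G T) card
    ⟨S, mem_filter.2 ⟨mem_powerset.2 hSA, subset_refl S, hS⟩⟩
  simp only [mem_filter, mem_powerset] at hM hmax
  refine ⟨M, hM.2.1, hM.1, hM.2.2, fun v hv hvM hind => ?_⟩
  have hle := hmax (insert v M) ⟨insert_subset hv hM.1, hM.2.1.trans (subset_insert v M), hind⟩
  rw [card_insert_of_notMem hvM] at hle
  omega

lemma IsMaxIndepIn.nonempty {A S : Finset V} {v : V} (hS : IsMaxIndepIn G A S) (hv : v ∈ A) :
    S.Nonempty := by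
  rw [nonempty_iff_ne_empty]
  rintro rfl
  exact hS.2.2 v hv (notMem_empty v) (isIndep_singleton v)

lemma IsMaxIndepIn.of_erase_of_adj {A S : Finset V} {s x : V}
    (hS : IsMaxIndepIn G (A.erase x) S) (hs : s ∈ S) (hsx : G.Adj s x) : IsMaxIndepIn G A S := by
  refine ⟨hS.1.trans (erase_subset x A), hS.2.1, fun v hv hvS hind => ?_⟩
  by_cases hvx : v = x
  · subst hvx
    exact hind s (mem_insert_of_mem hs) v (mem_insert_self v S) hsx
  · exact hS.2.2 v (mem_erase.2 ⟨hvx, hv⟩) hvS hind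

variable [Fintype V]

lemma mem_loc_singleton {s v : V} : v ∈ loc G {s} ↔ v ≠ s ∧ ¬ G.Adj s v := by
  simp only [loc, nbrSet, mem_sdiff, mem_univ, true_and, mem_union, mem_singleton, mem_filter,
    exists_eq_left, not_or, not_and, and_congr_right_iff]
  exact fun hvs => ⟨fun h hadj => h hvs hadj, fun h _ => h⟩

lemma IsMaxIndepIn.erase_loc {A S : Finset V} {s : V} (hS : IsMaxIndepIn G A S) (hs : s ∈ S) :
    IsMaxIndepIn G (A ∩ loc G {s}) (S.erase s) := by
  obtain ⟨hSA, hSind, hSmax⟩ := hS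
  refine ⟨fun t ht => ?_, hSind.mono (erase_subset s S), fun v hv hvS hind => ?_⟩
  · obtain ⟨hts, htS⟩ := mem_erase.1 ht
    exact mem_inter.2 ⟨hSA htS, mem_loc_singleton.2 ⟨hts, hSind s hs t htS⟩⟩
  · obtain ⟨hvA, hvloc⟩ := mem_inter.1 hv
    obtain ⟨hvs, hsv⟩ := mem_loc_singleton.1 hvloc
    have hvS' : v ∉ S := fun h => hvS (mem_erase.2 ⟨hvs, h⟩)
    obtain ⟨m, hm, hvm⟩ := hSind.exists_adj_of_not_isIndep_insert (hSmax v hvA hvS')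
    have hms : m ≠ s := by
      rintro rfl
      exact hsv hvm.symm
    exact hind v (mem_insert_self v _) m (mem_insert_of_mem (mem_erase.2 ⟨hms, hm⟩)) hvm

lemma wellCoveredIn_univ_of_loc [Nonempty V]
    (hloc : ∀ v : V, WellCoveredIn G (loc G {v}) ∧
      alphaIn G (loc G {v}) = alphaIn G univ - 1) :
    WellCoveredIn G univ := by
  intro M hM
  obtain ⟨v, hv⟩ := hM.nonempty (mem_univ (Classical.arbitrary V))
  have hloc_max := hM.erase_loc hv
  rw [univ_inter] at hloc_max
  have hcard := (hloc v).1 _ hloc_max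
  rw [(hloc v).2, card_erase_of_mem hv] at hcard
  have hpos : 0 < M.card := card_pos.2 ⟨v, hv⟩
  have hle := card_le_alphaIn hM.1 hM.2.1
  omega

lemma alphaIn_univ_erase_of_adj (hwc : WellCoveredIn G univ) {x y : V} (hxy : G.Adj x y) :
    alphaIn G (univ.erase x) = alphaIn G univ := by
  refine le_antisymm (alphaIn_mono (erase_subset x univ)) ?_
  obtain ⟨M, hyM, hM⟩ := exists_isMaxIndepIn_superset (subset_univ {y}) (isIndep_singleton y)
  have hxM : x ∉ M := fun hx => hM.2.1 x hx y (singleton_subset_iff.1 hyM) hxy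
  rw [← hwc M hM]
  exact card_le_alphaIn (fun v hv => mem_erase.2 ⟨ne_of_mem_of_not_mem hv hxM, mem_univ v⟩) hM.2.1

lemma wellCoveredIn_univ_erase
    (hloc : ∀ v : V, W2In G (loc G {v}) ∧ alphaIn G (loc G {v}) = alphaIn G univ - 1)
    (hwc : WellCoveredIn G univ) {x y : V} (hxy : G.Adj x y) :
    WellCoveredIn G (univ.erase x) := by
  intro S hS
  rw [alphaIn_univ_erase_of_adj hwc hxy]
  obtain ⟨s, hs⟩ := hS.nonempty (mem_erase.2 ⟨hxy.ne.symm, mem_univ y⟩)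
  by_cases hsx : G.Adj s x
  · exact hwc S (hS.of_erase_of_adj hs hsx)
  have hxs : x ≠ s := fun h => (mem_erase.1 (hS.1 (h ▸ hs))).1 rfl
  obtain ⟨hwc_erase, halpha_erase⟩ := (hloc s).1.2 x (mem_loc_singleton.2 ⟨hxs, hsx⟩)
  have hloc_max := hS.erase_loc hs
  rw [erase_inter, univ_inter] at hloc_max
  have hcard := hwc_erase _ hloc_max
  rw [halpha_erase, (hloc s).2, card_erase_of_mem hs] at hcard
  have hpos : 0 < S.card := card_pos.2 ⟨s, hs⟩
  have hle := card_le_alphaIn (subset_univ S) hS.2.1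
  omega

end IndependentSets

section EdgeIdealPaper

variable {V : Type*} [Fintype V] [DecidableEq V]

theorem stmt19_general (G : SimpleGraph V) (hni : ∀ v : V, ∃ u : V, G.Adj v u)
    (hloc : ∀ x : V, W2In G (loc G {x}) ∧
      alphaIn G (loc G {x}) = alphaIn G Finset.univ - 1) :
    ∀ x : V, WellCoveredIn G (Finset.univ.erase x) ∧
      alphaIn G (Finset.univ.erase x) = alphaIn G Finset.univ := by
  intro x
  obtain ⟨y, hxy⟩ := hni x
  have : Nonempty V := ⟨x⟩
  have hwc : WellCoveredIn G univ :=
    wellCoveredIn_univ_of_loc fun v => ⟨(hloc v).1.1, (hloc v).2⟩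
  exact ⟨wellCoveredIn_univ_erase hloc hwc hxy, alphaIn_univ_erase_of_adj hwc hxy⟩

/-- If `G` has no isolated vertices, every localization `G_x` is in `W₂` with
`α(G_x) = α(G) - 1`, every `G_{ab}` is well-covered with `α(G_{ab}) = α(G) - 1`,
and every `G_y` has no isolated vertices, then `G \ x` is well-covered with
`α(G \ x) = α(G)` for every vertex `x`. -/
theorem stmt19 (G : SimpleGraph V) (hni : ∀ v : V, ∃ u : V, G.Adj v u)
    (hloc : ∀ x : V, W2In G (loc G {x}) ∧
      alphaIn G (loc G {x}) = alphaIn G Finset.univ - 1)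
    (hedge : ∀ a b : V, G.Adj a b → WellCoveredIn G (locE G a b) ∧
      alphaIn G (locE G a b) = alphaIn G Finset.univ - 1)
    (hloc' : ∀ y : V, NoIsolatedIn G (loc G {y})) :
    ∀ x : V, WellCoveredIn G (Finset.univ.erase x) ∧
      alphaIn G (Finset.univ.erase x) = alphaIn G Finset.univ :=
  stmt19_general G hni hloc

end EdgeIdealPaper
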